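/- Let γ ∈ (0, 1) and c₁, c₂ ∈ (0, 1) with c₁ ≤ c₂, c₂ − c₁ ≤ γ/6, and c₂ ≤ 1 − γ/2. Define Cournot duopoly equilibrium quantities q*_i = (2 − γ − 2c_i + γ c_{−i})/(4 − γ²) and the expected welfare W(c₁, c₂) = q*₁ + q*₂ − ((q*₁)² + (q*₂)² + 2γ q*₁ q*₂)/2 + B − c₁ q*₁ − c₂ q*₂ for a constant B. Then ∂W/∂c₂ = ((12 − γ²) c₂ − (8γ − γ³) c₁ − (12 − 8γ − γ² + γ³)) / (4 − γ²)², and this quantity is strictly negative. -/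

import Mathlib

/-- Expected welfare in the Cournot duopoly with substitutability `γ`, consumer budget
`B`, and marginal costs `c₁, c₂`, evaluated at the equilibrium quantities
`q*_i = (2 - γ - 2c_i + γ c_{-i})/(4 - γ²)`. -/
noncomputable def welfare (γ B c₁ c₂ : ℝ) : ℝ :=
  let q₁ := (2 - γ - 2 * c₁ + γ * c₂) / (4 - γ ^ 2)
  let q₂ := (2 - γ - 2 * c₂ + γ * c₁) / (4 - γ ^ 2)
  q₁ + q₂ - (q₁ ^ 2 + q₂ ^ 2 + 2 * γ * q₁ * q₂) / 2 + B - c₁ * q₁ - c₂ * q₂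

/-!
Welfare is a quadratic polynomial in `c₂`, so its derivative is computed by the chain rule
from the two equilibrium quantities, which are affine in `c₂` with slopes `γ/(4 - γ²)` and
`-2/(4 - γ²)`. The numerator of the derivative is decreasing in `c₁`, so it is largest at
`c₁ = c₂ - γ/6`; there it is increasing in `c₂`, so it is largest at `c₂ = 1 - γ/2`, where it
equals `-γ (36 - 32γ - 3γ² + 4γ³)/6 < 0`.
-/

/-- The equilibrium quantity of the firm with cost `c` against a rival with cost `c'`. -/
noncomputable def cournotQuantity (γ c c' : ℝ) : ℝ :=
  (2 - γ - 2 * c + γ * c') / (4 - γ ^ 2)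

lemma welfare_eq (γ B c₁ c₂ : ℝ) :
    welfare γ B c₁ c₂ =
      let q₁ := cournotQuantity γ c₁ c₂
      let q₂ := cournotQuantity γ c₂ c₁
      q₁ + q₂ - (q₁ ^ 2 + q₂ ^ 2 + 2 * γ * q₁ * q₂) / 2 + B - c₁ * q₁ - c₂ * q₂ :=
  rfl

lemma hasDerivAt_cournotQuantity_own (γ c' x : ℝ) :
    HasDerivAt (fun c => cournotQuantity γ c c') (-2 / (4 - γ ^ 2)) x := by
  have h := (((hasDerivAt_id x).const_mul 2).const_sub (2 - γ)).add_const (γ * c')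
  simpa [cournotQuantity] using h.div_const (4 - γ ^ 2)

lemma hasDerivAt_cournotQuantity_rival (γ c x : ℝ) :
    HasDerivAt (fun c' => cournotQuantity γ c c') (γ / (4 - γ ^ 2)) x := by
  have h := ((hasDerivAt_id x).const_mul γ).const_add (2 - γ - 2 * c)
  simpa [cournotQuantity] using h.div_const (4 - γ ^ 2)

noncomputable def welfareDeriv (γ c₁ c₂ : ℝ) : ℝ :=
  ((12 - γ ^ 2) * c₂ - (8 * γ - γ ^ 3) * c₁ - (12 - 8 * γ - γ ^ 2 + γ ^ 3)) / (4 - γ ^ 2) ^ 2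

lemma hasDerivAt_welfare (γ B c₁ c₂ : ℝ) :
    HasDerivAt (fun c => welfare γ B c₁ c) (welfareDeriv γ c₁ c₂) c₂ := by
  have hq₁ := hasDerivAt_cournotQuantity_rival γ c₁ c₂
  have hq₂ := hasDerivAt_cournotQuantity_own γ c₁ c₂
  have hW := ((((hq₁.add hq₂).sub ((((hq₁.pow 2).add (hq₂.pow 2)).add
    ((hq₁.const_mul (2 * γ)).mul hq₂)).div_const 2)).add_const B).sub
    (hq₁.const_mul c₁)).sub ((hasDerivAt_id c₂).mul hq₂)
  simp only [welfare_eq]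
  refine hW.congr_deriv ?_
  by_cases hD : (4 : ℝ) - γ ^ 2 = 0
  -- for `γ² = 4` both sides vanish, since `x / 0 = 0`
  · simp [welfareDeriv, cournotQuantity, hD]
  · simp only [welfareDeriv, cournotQuantity, id]
    norm_num
    field_simp
    ring

lemma welfareDeriv_neg {γ c₁ c₂ : ℝ} (hγ₀ : 0 < γ) (hγ₁ : γ ≤ 1)
    (hc₁ : c₂ - γ / 6 ≤ c₁) (hc₂ : c₂ ≤ 1 - γ / 2) : welfareDeriv γ c₁ c₂ < 0 := by
  have hγsq : γ ^ 2 ≤ 1 := by nlinarith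
  have hK : 0 < 12 - 8 * γ - γ ^ 2 + γ ^ 3 := by nlinarith [pow_pos hγ₀ 3]
  have hslope : 0 ≤ 8 * γ - γ ^ 3 := by nlinarith
  set K := 12 - 8 * γ - γ ^ 2 + γ ^ 3
  have hnum : (12 - γ ^ 2) * c₂ - (8 * γ - γ ^ 3) * c₁ - K < 0 :=
    calc (12 - γ ^ 2) * c₂ - (8 * γ - γ ^ 3) * c₁ - K
        ≤ (12 - γ ^ 2) * c₂ - (8 * γ - γ ^ 3) * (c₂ - γ / 6) - K := by gcongr
      _ = K * c₂ + γ ^ 2 * (8 - γ ^ 2) / 6 - K := by ring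
      _ ≤ K * (1 - γ / 2) + γ ^ 2 * (8 - γ ^ 2) / 6 - K := by gcongr
      _ = -γ * (36 - 32 * γ - 3 * γ ^ 2 + 4 * γ ^ 3) / 6 := by ring
      _ < 0 := by
        have : 0 < 36 - 32 * γ - 3 * γ ^ 2 + 4 * γ ^ 3 := by nlinarith
        have : 0 < γ * (36 - 32 * γ - 3 * γ ^ 2 + 4 * γ ^ 3) := by positivity
        linarith
  exact div_neg_of_neg_of_pos hnum (by nlinarith)

theorem welfare_derivative_neg_general
    (γ B c₁ c₂ : ℝ) (hγ₁ : 0 < γ) (hγ₂ : γ < 1)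
    (hdiff : c₂ - c₁ ≤ γ / 6) (hbound : c₂ ≤ 1 - γ / 2) :
    HasDerivAt (fun c => welfare γ B c₁ c)
      (((12 - γ ^ 2) * c₂ - (8 * γ - γ ^ 3) * c₁ - (12 - 8 * γ - γ ^ 2 + γ ^ 3)) /
        (4 - γ ^ 2) ^ 2) c₂ ∧
    ((12 - γ ^ 2) * c₂ - (8 * γ - γ ^ 3) * c₁ - (12 - 8 * γ - γ ^ 2 + γ ^ 3)) /
        (4 - γ ^ 2) ^ 2 < 0 :=
  ⟨hasDerivAt_welfare γ B c₁ c₂,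
    welfareDeriv_neg hγ₁ hγ₂.le (by linarith) hbound⟩

/-- **Welfare decreases in the larger cost (welfare analysis).** For `γ ∈ (0,1)` and
`c₁ ≤ c₂` in `(0,1)` with `c₂ - c₁ ≤ γ/6` and `c₂ ≤ 1 - γ/2`, the derivative of welfare
with respect to `c₂` equals
`((12 - γ²) c₂ - (8γ - γ³) c₁ - (12 - 8γ - γ² + γ³))/(4 - γ²)²`, and this quantity is
strictly negative. -/
theorem welfare_derivative_neg
    (γ B c₁ c₂ : ℝ) (hγ₁ : 0 < γ) (hγ₂ : γ < 1)
    (hc₁ : c₁ ∈ Set.Ioo (0 : ℝ) 1) (hc₂ : c₂ ∈ Set.Ioo (0 : ℝ) 1)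
    (hle : c₁ ≤ c₂) (hdiff : c₂ - c₁ ≤ γ / 6) (hbound : c₂ ≤ 1 - γ / 2) :
    HasDerivAt (fun c => welfare γ B c₁ c)
      (((12 - γ ^ 2) * c₂ - (8 * γ - γ ^ 3) * c₁ - (12 - 8 * γ - γ ^ 2 + γ ^ 3)) /
        (4 - γ ^ 2) ^ 2) c₂ ∧
    ((12 - γ ^ 2) * c₂ - (8 * γ - γ ^ 3) * c₁ - (12 - 8 * γ - γ ^ 2 + γ ^ 3)) /
        (4 - γ ^ 2) ^ 2 < 0 :=
  welfare_derivative_neg_general γ B c₁ c₂ hγ₁ hγ₂ hdiff hbound
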